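/- Let W ∈ C¹(ℝᵐ;ℝ) with m ≥ 1 (W possibly sign-changing), let n ≥ 2, and let v(x) = u(|x|) be a radially symmetric C² solution of Δv = ∇W(v) in ℝⁿ, where u ∈ C²([0,∞);ℝᵐ) satisfies u'' + ((n−1)/r)u' = ∇W(u) on (0,∞) with u'(0) = 0. Then the function R ↦ (1/Rⁿ) ∫_{B(0,R)} { ((n−2)/2)|∇v|² + n W(v) } dx is nondecreasing on (0,∞); that is, its derivative with respect to R is nonnegative for every R > 0. -/

import Mathlib

/-!
The friction term `((n-1)/r) u'` of the radial equation dissipates the Hamiltonian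
`H = ‖u'‖²/2 - W(u)`: along solutions `H' = -((n-1)/r) ‖u'‖² ≤ 0`. Using the equation once more,
`(r^n H)' = -r^(n-1) ((n-2)/2 ‖u'‖² + n W(u))`, so in polar coordinates the energy of the ball
`B(0,R)` is `-n |B(0,1)| R^n H(R)` and the normalized energy is `-n |B(0,1)| H(R)`.
-/

open MeasureTheory Metric Set

open scoped RealInnerProductSpace

section Polar

variable {E F : Type*} [NormedAddCommGroup E] [NormedSpace ℝ E] [Nontrivial E]
  [FiniteDimensional ℝ E] [MeasurableSpace E] [BorelSpace E]
  [NormedAddCommGroup F] [NormedSpace ℝ F]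

theorem setIntegral_ball_fun_norm_addHaar (μ : Measure E) [μ.IsAddHaarMeasure] (f : ℝ → F)
    {R : ℝ} (hR : 0 ≤ R) :
    ∫ x in ball (0 : E) R, f ‖x‖ ∂μ = Module.finrank ℝ E • μ.real (ball 0 1) •
      ∫ r in 0..R, r ^ (Module.finrank ℝ E - 1) • f r := by
  have hball : ∀ x : E, (ball (0 : E) R).indicator (fun x => f ‖x‖) x = (Iio R).indicator f ‖x‖ :=
    fun x => by by_cases hx : ‖x‖ < R <;> simp [indicator, hx]
  have hIio : ∀ r : ℝ, r ^ (Module.finrank ℝ E - 1) • (Iio R).indicator f r =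
      (Iio R).indicator (fun r => r ^ (Module.finrank ℝ E - 1) • f r) r :=
    fun r => by by_cases hr : r < R <;> simp [indicator, hr]
  rw [← integral_indicator measurableSet_ball, funext hball, integral_fun_norm_addHaar,
    funext hIio, integral_indicator measurableSet_Iio, Measure.restrict_restrict measurableSet_Iio,
    Iio_inter_Ioi, intervalIntegral.integral_of_le hR, integral_Ioc_eq_integral_Ioo]

end Polar

section RadialODE

variable {E : Type*} [NormedAddCommGroup E] {n : ℕ} {W : E → ℝ} {u u' u'' : ℝ → E}

noncomputable def radialHamiltonian (W : E → ℝ) (u u' : ℝ → E) (r : ℝ) : ℝ :=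
  ‖u' r‖ ^ 2 / 2 - W (u r)

noncomputable def radialEnergyDensity (n : ℕ) (W : E → ℝ) (u u' : ℝ → E) (r : ℝ) : ℝ :=
  ((n : ℝ) - 2) / 2 * ‖u' r‖ ^ 2 + (n : ℝ) * W (u r)

theorem hasDerivAt_pow_mul_radialHamiltonian (hn : 1 ≤ n) {s : ℝ} (hs : s ≠ 0)
    (hH : HasDerivAt (radialHamiltonian W u u') (-(((n : ℝ) - 1) / s * ‖u' s‖ ^ 2)) s) :
    HasDerivAt (fun r => -(r ^ n * radialHamiltonian W u u' r))
      (s ^ (n - 1) * radialEnergyDensity n W u u' s) s := by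
  refine ((hasDerivAt_pow n s).mul hH).neg.congr_deriv ?_
  obtain ⟨k, rfl⟩ := Nat.exists_eq_add_of_le' hn
  simp only [radialHamiltonian, radialEnergyDensity, Nat.add_sub_cancel, pow_succ]
  field_simp
  push_cast
  ring

variable [InnerProductSpace ℝ E] [CompleteSpace E]

theorem hasDerivAt_radialHamiltonian {r : ℝ} (hW : DifferentiableAt ℝ W (u r))
    (hu : HasDerivAt u (u' r) r) (hu' : HasDerivAt u' (u'' r) r)
    (hODE : u'' r + (((n : ℝ) - 1) / r) • u' r = gradient W (u r)) :
    HasDerivAt (radialHamiltonian W u u') (-(((n : ℝ) - 1) / r * ‖u' r‖ ^ 2)) r := by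
  have hWu : HasDerivAt (fun s => W (u s)) ⟪gradient W (u r), u' r⟫ r :=
    hW.hasGradientAt.hasFDerivAt.comp_hasDerivAt r hu
  refine ((hu'.norm_sq.div_const 2).sub hWu).congr_deriv ?_
  rw [← hODE, inner_add_left, real_inner_smul_left, real_inner_self_eq_norm_sq,
    real_inner_comm]
  ring

theorem antitoneOn_radialHamiltonian (hn : 1 ≤ n) (hW : Differentiable ℝ W)
    (hu : ∀ r > 0, HasDerivAt u (u' r) r) (hu' : ∀ r > 0, HasDerivAt u' (u'' r) r)
    (hODE : ∀ r > 0, u'' r + (((n : ℝ) - 1) / r) • u' r = gradient W (u r)) :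
    AntitoneOn (radialHamiltonian W u u') (Ioi 0) := by
  have hderiv : ∀ r ∈ Ioi (0 : ℝ), HasDerivAt (radialHamiltonian W u u')
      (-(((n : ℝ) - 1) / r * ‖u' r‖ ^ 2)) r :=
    fun r hr => hasDerivAt_radialHamiltonian (hW _) (hu r hr) (hu' r hr) (hODE r hr)
  have hn' : (1 : ℝ) ≤ n := by exact_mod_cast hn
  refine antitoneOn_of_hasDerivWithinAt_nonpos
    (f' := fun r => -(((n : ℝ) - 1) / r * ‖u' r‖ ^ 2)) (convex_Ioi 0)
    (fun r hr => (hderiv r hr).continuousAt.continuousWithinAt) ?_ ?_ <;> rw [interior_Ioi]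
  · exact fun r hr => (hderiv r hr).hasDerivWithinAt
  · intro r (hr : 0 < r)
    have : 0 ≤ ((n : ℝ) - 1) / r := div_nonneg (by linarith) hr.le
    exact neg_nonpos.mpr (by positivity)

theorem integral_pow_mul_radialEnergyDensity (hn : 1 ≤ n) (hW : Differentiable ℝ W)
    (huc : ContinuousOn u (Ici 0)) (hu'c : ContinuousOn u' (Ici 0))
    (hu : ∀ r > 0, HasDerivAt u (u' r) r) (hu' : ∀ r > 0, HasDerivAt u' (u'' r) r)
    (hODE : ∀ r > 0, u'' r + (((n : ℝ) - 1) / r) • u' r = gradient W (u r))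
    {R : ℝ} (hR : 0 ≤ R) :
    ∫ r in 0..R, r ^ (n - 1) * radialEnergyDensity n W u u' r =
      -(R ^ n * radialHamiltonian W u u' R) := by
  have hWc := hW.continuous
  have hIcc : Icc 0 R ⊆ Ici 0 := Icc_subset_Ici_self
  have hHc : ContinuousOn (radialHamiltonian W u u') (Icc 0 R) := by
    unfold radialHamiltonian
    exact ((hu'c.norm.pow 2 |>.div_const 2).sub (hWc.comp_continuousOn huc)).mono hIcc
  have hEc : ContinuousOn (radialEnergyDensity n W u u') (Icc 0 R) := by
    unfold radialEnergyDensity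
    exact ((continuousOn_const.mul (hu'c.norm.pow 2)).add
      (continuousOn_const.mul (hWc.comp_continuousOn huc))).mono hIcc
  have hFTC := intervalIntegral.integral_eq_sub_of_hasDerivAt_of_le
    (f := fun r => -(r ^ n * radialHamiltonian W u u' r)) hR
    ((continuousOn_pow n).mul hHc).neg
    (fun s hs => hasDerivAt_pow_mul_radialHamiltonian hn hs.1.ne'
      (hasDerivAt_radialHamiltonian (hW _) (hu s hs.1) (hu' s hs.1) (hODE s hs.1)))
    (((continuousOn_pow (n - 1)).mul hEc).intervalIntegrable_of_Icc hR)
  rw [hFTC, zero_pow (by omega), zero_mul, neg_zero, sub_zero]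

end RadialODE

theorem radial_energy_monotonicity_general
    {m n : ℕ} (hn : 2 ≤ n)
    (W : EuclideanSpace ℝ (Fin m) → ℝ) (hW : ContDiff ℝ 1 W)
    (u u' u'' : ℝ → EuclideanSpace ℝ (Fin m))
    (hu' : ∀ r ∈ Set.Ici (0 : ℝ), HasDerivWithinAt u (u' r) (Set.Ici 0) r)
    (hu'' : ∀ r ∈ Set.Ici (0 : ℝ), HasDerivWithinAt u' (u'' r) (Set.Ici 0) r)
    (hODE : ∀ r : ℝ, 0 < r →
      u'' r + (((n : ℝ) - 1) / r) • u' r = gradient W (u r)) :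
    MonotoneOn (fun R : ℝ =>
      (1 / R ^ n) * ∫ x in Metric.ball (0 : EuclideanSpace ℝ (Fin n)) R,
        (((n : ℝ) - 2) / 2 * ‖u' ‖x‖‖ ^ 2 + (n : ℝ) * W (u ‖x‖)))
      (Set.Ioi 0) := by
  have hn1 : 1 ≤ n := by omega
  have : NeZero n := ⟨by omega⟩
  have hWd : Differentiable ℝ W := hW.differentiable one_ne_zero
  have huc : ContinuousOn u (Ici 0) := fun r hr => (hu' r hr).continuousWithinAt
  have hu'c : ContinuousOn u' (Ici 0) := fun r hr => (hu'' r hr).continuousWithinAt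
  have hu_at : ∀ r > 0, HasDerivAt u (u' r) r :=
    fun r hr => (hu' r hr.le).hasDerivAt (Ici_mem_nhds hr)
  have hu'_at : ∀ r > 0, HasDerivAt u' (u'' r) r :=
    fun r hr => (hu'' r hr.le).hasDerivAt (Ici_mem_nhds hr)
  set c := (n : ℝ) * volume.real (ball (0 : EuclideanSpace ℝ (Fin n)) 1)
  have hc : 0 ≤ c := by positivity
  have hH := antitoneOn_radialHamiltonian hn1 hWd hu_at hu'_at hODE
  refine MonotoneOn.congr (f₁ := fun R => -(c * radialHamiltonian W u u' R))
    (fun a ha b hb hab => neg_le_neg (mul_le_mul_of_nonneg_left (hH ha hb hab) hc))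
    fun R (hR : 0 < R) => ?_
  change _ = 1 / R ^ n * ∫ x in ball 0 R, radialEnergyDensity n W u u' ‖x‖
  rw [setIntegral_ball_fun_norm_addHaar volume _ hR.le, finrank_euclideanSpace_fin]
  simp only [smul_eq_mul, nsmul_eq_mul]
  rw [integral_pow_mul_radialEnergyDensity hn1 hWd huc hu'c hu_at hu'_at hODE hR.le]
  field_simp
  ring

/-- **Strong energy monotonicity for radial solutions.** Let `W ∈ C¹(ℝᵐ;ℝ)`
(possibly sign-changing), `n ≥ 2`, and let `v(x) = u(|x|)` be a radially
symmetric solution of `Δv = ∇W(v)` in `ℝⁿ`, where `u ∈ C²([0,∞);ℝᵐ)` satisfies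
`u'' + ((n−1)/r)u' = ∇W(u)` on `(0,∞)` with `u'(0) = 0`. Then
`R ↦ (1/Rⁿ) ∫_{B(0,R)} { ((n−2)/2)|∇v|² + n W(v) } dx` is nondecreasing on
`(0,∞)` (here `|∇v(x)|² = |u'(|x|)|²`). -/
theorem radial_energy_monotonicity
    {m n : ℕ} (hm : 1 ≤ m) (hn : 2 ≤ n)
    (W : EuclideanSpace ℝ (Fin m) → ℝ) (hW : ContDiff ℝ 1 W)
    (u u' u'' : ℝ → EuclideanSpace ℝ (Fin m))
    (hu' : ∀ r ∈ Set.Ici (0 : ℝ), HasDerivWithinAt u (u' r) (Set.Ici 0) r)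
    (hu'' : ∀ r ∈ Set.Ici (0 : ℝ), HasDerivWithinAt u' (u'' r) (Set.Ici 0) r)
    (hu''cont : ContinuousOn u'' (Set.Ici 0))
    (hODE : ∀ r : ℝ, 0 < r →
      u'' r + (((n : ℝ) - 1) / r) • u' r = gradient W (u r))
    (hinit : u' 0 = 0)
    (v : EuclideanSpace ℝ (Fin n) → EuclideanSpace ℝ (Fin m))
    (hv : ∀ x, v x = u ‖x‖) :
    MonotoneOn (fun R : ℝ =>
      (1 / R ^ n) * ∫ x in Metric.ball (0 : EuclideanSpace ℝ (Fin n)) R,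
        (((n : ℝ) - 2) / 2 * ‖u' ‖x‖‖ ^ 2 + (n : ℝ) * W (u ‖x‖)))
      (Set.Ioi 0) :=
  radial_energy_monotonicity_general hn W hW u u' u'' hu' hu'' hODE
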